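/- arXiv:2503.06206 — 8 statements merged into one kernel-verified Lean document; each statement's English description precedes it below -/
import Mathlib

section
/- Let f : ℝⁿ → ℝⁿ be continuously differentiable with f' Lipschitz with constant L on an open convex set Ω, let x* ∈ Ω, let B_k be a linear map on ℝⁿ, and let x_k, y_k ∈ Ω with y_k ≠ x_k. Define s_k = y_k - x_k, z_k = f(y_k) - f(x_k), and B_{k+1} = B_k + (z_k - B_k s_k) s_kᵀ / ‖s_k‖². Then ‖B_{k+1} - f'(x*)‖ ≤ ‖B_k - f'(x*)‖ + (L/2)(‖y_k - x*‖ + ‖x_k - x*‖). -/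
/-!
Along the segment from `x` to `y = x + s`, the map `t ↦ f (x + t • s) - t • f' c s` has derivative
of norm at most `L ‖s‖ ((1 - t) ‖x - c‖ + t ‖y - c‖)`; comparing it with a primitive of this bound
on `[0, 1]` gives `‖f y - f x - f' c s‖ ≤ L / 2 (‖y - c‖ + ‖x - c‖) ‖s‖`. The Broyden update satisfies
`B₊ - A = (B - A) ∘ P + ‖s‖⁻² ⟪s, ·⟫ (z - A s)`, where `P` is the orthogonal projection onto `sᗮ`;
since `‖P‖ ≤ 1`, this gives `‖B₊ - A‖ ≤ ‖B - A‖ + ‖z - A s‖ / ‖s‖`.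
-/

open scoped RealInnerProductSpace

section Segment

variable {E F : Type*} [NormedAddCommGroup E] [NormedSpace ℝ E]
  [NormedAddCommGroup F] [NormedSpace ℝ F]

theorem norm_add_smul_sub_sub_le (x y c : E) {t : ℝ} (ht : t ∈ Set.Icc (0 : ℝ) 1) :
    ‖x + t • (y - x) - c‖ ≤ (1 - t) * ‖x - c‖ + t * ‖y - c‖ := by
  have h := convexOn_univ_norm.2 (Set.mem_univ (x - c)) (Set.mem_univ (y - c))
    (sub_nonneg.2 ht.2) ht.1 (sub_add_cancel 1 t)
  rw [smul_eq_mul, smul_eq_mul] at h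
  calc ‖x + t • (y - x) - c‖ = ‖(1 - t) • (x - c) + t • (y - c)‖ := by congr 1; module
    _ ≤ _ := h

theorem norm_sub_sub_apply_sub_le_of_norm_sub_le {Ω : Set E} (hΩ : Convex ℝ Ω) {f : E → F}
    {f' : E → E →L[ℝ] F} (hf : ∀ x ∈ Ω, HasFDerivAt f (f' x) x) {c : E} {L : ℝ} (hL : 0 ≤ L)
    (hLip : ∀ u ∈ Ω, ‖f' u - f' c‖ ≤ L * ‖u - c‖) {x y : E} (hx : x ∈ Ω) (hy : y ∈ Ω) :
    ‖f y - f x - f' c (y - x)‖ ≤ L / 2 * (‖y - c‖ + ‖x - c‖) * ‖y - x‖ := by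
  set s := y - x
  set a := ‖x - c‖
  set b := ‖y - c‖
  have hmem : ∀ t ∈ Set.Icc (0 : ℝ) 1, x + t • s ∈ Ω := fun t ht => hΩ.add_smul_sub_mem hx hy ht
  have hderiv : ∀ t ∈ Set.Icc (0 : ℝ) 1, HasDerivAt (fun t : ℝ => f (x + t • s) - f x - t • f' c s)
      (f' (x + t • s) s - f' c s) t := by
    intro t ht
    have hline : HasDerivAt (fun t : ℝ => x + t • s) s t := by
      simpa using ((hasDerivAt_id t).smul_const s).const_add x
    exact (((hf _ (hmem t ht)).comp_hasDerivAt t hline).sub_const (f x)).sub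
      (by simpa using (hasDerivAt_id t).smul_const (f' c s))
  have hbound : ∀ t ∈ Set.Icc (0 : ℝ) 1,
      ‖f' (x + t • s) s - f' c s‖ ≤ L * ‖s‖ * ((1 - t) * a + t * b) := by
    intro t ht
    calc ‖f' (x + t • s) s - f' c s‖ ≤ ‖f' (x + t • s) - f' c‖ * ‖s‖ :=
          (f' (x + t • s) - f' c).le_opNorm s
      _ ≤ L * ‖x + t • s - c‖ * ‖s‖ := by gcongr; exact hLip _ (hmem t ht)
      _ ≤ L * ((1 - t) * a + t * b) * ‖s‖ := by
          gcongr; exact norm_add_smul_sub_sub_le x y c ht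
      _ = L * ‖s‖ * ((1 - t) * a + t * b) := by ring
  have hB : ∀ t : ℝ, HasDerivAt (fun t : ℝ => L * ‖s‖ * (a * t + (b - a) * t ^ 2 / 2))
      (L * ‖s‖ * ((1 - t) * a + t * b)) t := by
    intro t
    refine ((((hasDerivAt_id t).const_mul a).add
      (((hasDerivAt_pow 2 t).const_mul (b - a)).div_const 2)).const_mul (L * ‖s‖)).congr_deriv ?_
    ring
  have hfence := image_norm_le_of_norm_deriv_right_le_deriv_boundary
    (fun t ht => (hderiv t ht).continuousAt.continuousWithinAt)
    (fun t ht => (hderiv t (Set.Ico_subset_Icc_self ht)).hasDerivWithinAt) (by simp) hB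
    (fun t ht => hbound t (Set.Ico_subset_Icc_self ht)) (Set.right_mem_Icc.2 zero_le_one)
  rw [one_smul, one_smul, add_sub_cancel] at hfence
  convert hfence using 1
  ring

end Segment

section Broyden

variable {E F : Type*} [NormedAddCommGroup E] [InnerProductSpace ℝ E]
  [NormedAddCommGroup F] [NormedSpace ℝ F]

noncomputable def broydenUpdate (B : E →L[ℝ] F) (s : E) (z : F) : E →L[ℝ] F :=
  B + (‖s‖ ^ 2)⁻¹ • (innerSL ℝ s).smulRight (z - B s)

theorem broydenUpdate_sub_eq (B A : E →L[ℝ] F) (s : E) (z : F) :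
    broydenUpdate B s z - A =
      (B - A).comp (ℝ ∙ s)ᗮ.starProjection + (‖s‖ ^ 2)⁻¹ • (innerSL ℝ s).smulRight (z - A s) := by
  ext w
  simp only [broydenUpdate, sub_apply, add_apply,
    ContinuousLinearMap.comp_apply, smul_apply,
    ContinuousLinearMap.smulRight_apply, innerSL_apply_apply,
    Submodule.starProjection_orthogonal_val, Submodule.starProjection_singleton, RCLike.ofReal_real_eq_id, id, map_sub, map_smul]
  module

theorem norm_smul_innerSL_smulRight (s : E) (v : F) :
    ‖(‖s‖ ^ 2)⁻¹ • (innerSL ℝ s).smulRight v‖ = ‖v‖ / ‖s‖ := by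
  rw [norm_smul, ContinuousLinearMap.norm_smulRight_apply, innerSL_apply_norm, norm_inv,
    norm_pow, norm_norm]
  rcases eq_or_ne ‖s‖ 0 with hs | hs
  · simp [hs]
  · field_simp

theorem norm_broydenUpdate_sub_le (B A : E →L[ℝ] F) (s : E) (z : F) :
    ‖broydenUpdate B s z - A‖ ≤ ‖B - A‖ + ‖z - A s‖ / ‖s‖ := by
  rw [broydenUpdate_sub_eq, ← norm_smul_innerSL_smulRight]
  refine (norm_add_le _ _).trans (add_le_add_left ?_ _)
  calc ‖(B - A).comp (ℝ ∙ s)ᗮ.starProjection‖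
      ≤ ‖B - A‖ * ‖(ℝ ∙ s)ᗮ.starProjection‖ := ContinuousLinearMap.opNorm_comp_le _ _
    _ ≤ ‖B - A‖ := mul_le_of_le_one_right (norm_nonneg _) (Submodule.starProjection_norm_le _)

end Broyden

theorem stmt_2_general {n : ℕ} (Ω : Set (EuclideanSpace ℝ (Fin n)))
    (hconv : Convex ℝ Ω)
    (f : EuclideanSpace ℝ (Fin n) → EuclideanSpace ℝ (Fin n))
    (f' : EuclideanSpace ℝ (Fin n) → EuclideanSpace ℝ (Fin n) →L[ℝ] EuclideanSpace ℝ (Fin n))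
    (hdiff : ∀ x ∈ Ω, HasFDerivAt f (f' x) x)
    (L : ℝ) (hL : 0 < L)
    (hLip : ∀ u ∈ Ω, ∀ v ∈ Ω, ‖f' u - f' v‖ ≤ L * ‖u - v‖)
    (xs xk yk : EuclideanSpace ℝ (Fin n)) (hxs : xs ∈ Ω) (hxk : xk ∈ Ω) (hyk : yk ∈ Ω)
    (Bk : EuclideanSpace ℝ (Fin n) →L[ℝ] EuclideanSpace ℝ (Fin n))
    (sk zk : EuclideanSpace ℝ (Fin n))
    (hsk : sk = yk - xk) (hzk : zk = f yk - f xk)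
    (Bk1 : EuclideanSpace ℝ (Fin n) →L[ℝ] EuclideanSpace ℝ (Fin n))
    (hBk1 : Bk1 = Bk + (‖sk‖ ^ 2)⁻¹ • ((innerSL ℝ sk).smulRight (zk - Bk sk))) :
    ‖Bk1 - f' xs‖ ≤ ‖Bk - f' xs‖ + L / 2 * (‖yk - xs‖ + ‖xk - xs‖) := by
  have hsecant : ‖zk - f' xs sk‖ ≤ L / 2 * (‖yk - xs‖ + ‖xk - xs‖) * ‖sk‖ := by
    rw [hzk, hsk]
    exact norm_sub_sub_apply_sub_le_of_norm_sub_le hconv hdiff hL.le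
      (fun u hu => hLip u hu xs hxs) hxk hyk
  calc ‖Bk1 - f' xs‖ ≤ ‖Bk - f' xs‖ + ‖zk - f' xs sk‖ / ‖sk‖ :=
        hBk1 ▸ norm_broydenUpdate_sub_le Bk (f' xs) sk zk
    _ ≤ ‖Bk - f' xs‖ + L / 2 * (‖yk - xs‖ + ‖xk - xs‖) := by
        gcongr
        exact div_le_of_le_mul₀ (norm_nonneg _) (by positivity) hsecant

theorem stmt_2 {n : ℕ} (Ω : Set (EuclideanSpace ℝ (Fin n))) (hΩ : IsOpen Ω)
    (hconv : Convex ℝ Ω)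
    (f : EuclideanSpace ℝ (Fin n) → EuclideanSpace ℝ (Fin n))
    (f' : EuclideanSpace ℝ (Fin n) → EuclideanSpace ℝ (Fin n) →L[ℝ] EuclideanSpace ℝ (Fin n))
    (hdiff : ∀ x ∈ Ω, HasFDerivAt f (f' x) x)
    (hcont : ContinuousOn f' Ω)
    (L : ℝ) (hL : 0 < L)
    (hLip : ∀ u ∈ Ω, ∀ v ∈ Ω, ‖f' u - f' v‖ ≤ L * ‖u - v‖)
    (xs xk yk : EuclideanSpace ℝ (Fin n)) (hxs : xs ∈ Ω) (hxk : xk ∈ Ω) (hyk : yk ∈ Ω)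
    (hne : yk ≠ xk)
    (Bk : EuclideanSpace ℝ (Fin n) →L[ℝ] EuclideanSpace ℝ (Fin n))
    (sk zk : EuclideanSpace ℝ (Fin n))
    (hsk : sk = yk - xk) (hzk : zk = f yk - f xk)
    (Bk1 : EuclideanSpace ℝ (Fin n) →L[ℝ] EuclideanSpace ℝ (Fin n))
    (hBk1 : Bk1 = Bk + (‖sk‖ ^ 2)⁻¹ • ((innerSL ℝ sk).smulRight (zk - Bk sk))) :
    ‖Bk1 - f' xs‖ ≤ ‖Bk - f' xs‖ + L / 2 * (‖yk - xs‖ + ‖xk - xs‖) :=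
  stmt_2_general Ω hconv f f' hdiff L hL hLip xs xk yk hxs hxk hyk Bk sk zk hsk hzk Bk1 hBk1
end

section
/- Let C ⊆ ℝⁿ be closed and convex, let y, ỹ ∈ ℝⁿ, x ∈ C, θ ≥ 0, and let u ∈ C satisfy ⟨y - u, z - u⟩ ≤ θ‖y - x‖² for all z ∈ C (i.e., u is a feasible inexact projection of y). Then ‖u - P_C(ỹ)‖ ≤ ‖y - ỹ‖ + √(2θ)‖y - x‖, where P_C(ỹ) is the exact metric projection of ỹ onto C. -/
open Metric
open scoped RealInnerProductSpace

theorem stmt_3 {n : ℕ} (C : Set (EuclideanSpace ℝ (Fin n)))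
    (hCne : C.Nonempty) (hCclosed : IsClosed C) (hCconv : Convex ℝ C)
    (y ytil : EuclideanSpace ℝ (Fin n)) (x : EuclideanSpace ℝ (Fin n)) (hx : x ∈ C)
    (θ : ℝ) (hθ : 0 ≤ θ)
    (u : EuclideanSpace ℝ (Fin n)) (hu : u ∈ C)
    (hinexact : ∀ z ∈ C, ⟪y - u, z - u⟫ ≤ θ * ‖y - x‖ ^ 2)
    (p : EuclideanSpace ℝ (Fin n)) (hp : p ∈ C)
    (hproj : ∀ z ∈ C, ⟪ytil - p, z - p⟫ ≤ 0) :
    ‖u - p‖ ≤ ‖y - ytil‖ + Real.sqrt (2 * θ) * ‖y - x‖ := by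
  have h1 : ⟪y - u, p - u⟫ ≤ θ * ‖y - x‖ ^ 2 := hinexact p hp
  have h2 : ⟪ytil - p, u - p⟫ ≤ 0 := hproj u hu
  have h3 : ⟪y - ytil, u - p⟫ ≤ ‖y - ytil‖ * ‖u - p‖ := real_inner_le_norm _ _
  have expand : ‖u - p‖ ^ 2 =
      ⟪y - u, p - u⟫ + ⟪y - ytil, u - p⟫ + ⟪ytil - p, u - p⟫ := by
    rw [← real_inner_self_eq_norm_sq]
    simp only [inner_sub_left, inner_sub_right]
    ring
  have key : ‖u - p‖ ^ 2 ≤ ‖y - ytil‖ * ‖u - p‖ + θ * ‖y - x‖ ^ 2 := by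
    rw [expand]; linarith
  set r := Real.sqrt (2 * θ) * ‖y - x‖ with hrdef
  have hr : 0 ≤ r := mul_nonneg (Real.sqrt_nonneg _) (norm_nonneg _)
  have hr2 : θ * ‖y - x‖ ^ 2 ≤ r ^ 2 := by
    have : r ^ 2 = (2 * θ) * ‖y - x‖ ^ 2 := by
      rw [hrdef, mul_pow, Real.sq_sqrt (by linarith)]
    nlinarith [sq_nonneg ‖y - x‖]
  nlinarith [key, hr, hr2, norm_nonneg (u - p), norm_nonneg (y - ytil),
    sq_nonneg (‖u - p‖ - ‖y - ytil‖ - r)]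
end

section
/- Let g : Ω → ℝⁿ admit first- and second-order divided differences on the open set Ω ⊆ ℝⁿ satisfying [x,y;g](y-x) = g(y) - g(x) and [x,y,z;g](z-x) = [y,z;g] - [x,y;g], and suppose ‖[x,y,z;g]‖ ≤ M for all x, y, z ∈ Ω. Then for all x, x', z, x₀, x* ∈ Ω with the relevant points distinct, ‖g(x') - g(x) - [z, x*; g](x' - x)‖ ≤ M(‖x' - z‖ + ‖x* - x‖)‖x' - x‖. -/
open Metric

theorem stmt_6 {n : ℕ} (Ω : Set (EuclideanSpace ℝ (Fin n))) (hΩ : IsOpen Ω)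
    (g : EuclideanSpace ℝ (Fin n) → EuclideanSpace ℝ (Fin n))
    (D1 : EuclideanSpace ℝ (Fin n) → EuclideanSpace ℝ (Fin n) →
      (EuclideanSpace ℝ (Fin n) →L[ℝ] EuclideanSpace ℝ (Fin n)))
    (D2 : EuclideanSpace ℝ (Fin n) → EuclideanSpace ℝ (Fin n) → EuclideanSpace ℝ (Fin n) →
      (EuclideanSpace ℝ (Fin n) →L[ℝ]
        EuclideanSpace ℝ (Fin n) →L[ℝ] EuclideanSpace ℝ (Fin n)))
    (hD1 : ∀ x ∈ Ω, ∀ y ∈ Ω, D1 x y (y - x) = g y - g x)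
    (hD2 : ∀ x ∈ Ω, ∀ y ∈ Ω, ∀ z ∈ Ω, D2 x y z (z - x) = D1 y z - D1 x y)
    (M : ℝ) (hM : 0 < M)
    (hbound : ∀ x ∈ Ω, ∀ y ∈ Ω, ∀ z ∈ Ω, ‖D2 x y z‖ ≤ M) :
    ∀ x ∈ Ω, ∀ x' ∈ Ω, ∀ z ∈ Ω, ∀ xs ∈ Ω,
      x ≠ x' → z ≠ x → z ≠ xs → x' ≠ z → x ≠ xs →
      ‖g x' - g x - D1 z xs (x' - x)‖ ≤ M * (‖x' - z‖ + ‖xs - x‖) * ‖x' - x‖ := by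
  intro x hx x' hx' z hz xs hxs _ _ _ _ _
  have h1 : g x' - g x = D1 x' x (x' - x) := by
    have h := hD1 x' hx' x hx
    have : D1 x' x (x' - x) = -(D1 x' x (x - x')) := by
      rw [← map_neg]; congr 1; abel
    rw [this, h]; abel
  have e1 := hD2 z hz xs hxs x' hx'
  have e2 := hD2 xs hxs x' hx' x hx
  have key : g x' - g x - D1 z xs (x' - x)
      = (D2 z xs x' (x' - z)) (x' - x) + (D2 xs x' x (x - xs)) (x' - x) := by
    rw [h1, e1, e2]
    simp [ContinuousLinearMap.sub_apply]
  rw [key]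
  have b1 : ‖(D2 z xs x' (x' - z)) (x' - x)‖ ≤ M * ‖x' - z‖ * ‖x' - x‖ := by
    calc ‖(D2 z xs x' (x' - z)) (x' - x)‖ ≤ ‖D2 z xs x' (x' - z)‖ * ‖x' - x‖ :=
          (D2 z xs x' (x' - z)).le_opNorm _
      _ ≤ (‖D2 z xs x'‖ * ‖x' - z‖) * ‖x' - x‖ := by
          gcongr; exact (D2 z xs x').le_opNorm _
      _ ≤ M * ‖x' - z‖ * ‖x' - x‖ := by
          gcongr; exact hbound z hz xs hxs x' hx'
  have b2 : ‖(D2 xs x' x (x - xs)) (x' - x)‖ ≤ M * ‖xs - x‖ * ‖x' - x‖ := by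
    have hnorm : ‖x - xs‖ = ‖xs - x‖ := norm_sub_rev _ _
    calc ‖(D2 xs x' x (x - xs)) (x' - x)‖ ≤ ‖D2 xs x' x (x - xs)‖ * ‖x' - x‖ :=
          (D2 xs x' x (x - xs)).le_opNorm _
      _ ≤ (‖D2 xs x' x‖ * ‖x - xs‖) * ‖x' - x‖ := by
          gcongr; exact (D2 xs x' x).le_opNorm _
      _ ≤ M * ‖xs - x‖ * ‖x' - x‖ := by
          rw [hnorm]; gcongr; exact hbound xs hxs x' hx' x hx
  calc ‖(D2 z xs x' (x' - z)) (x' - x) + (D2 xs x' x (x - xs)) (x' - x)‖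
      ≤ ‖(D2 z xs x' (x' - z)) (x' - x)‖ + ‖(D2 xs x' x (x - xs)) (x' - x)‖ :=
        norm_add_le _ _
    _ ≤ M * ‖x' - z‖ * ‖x' - x‖ + M * ‖xs - x‖ * ‖x' - x‖ := add_le_add b1 b2
    _ = M * (‖x' - z‖ + ‖xs - x‖) * ‖x' - x‖ := by ring
end

section
/- Let Φ : ℝⁿ ⇉ ℝⁿ be a set-valued mapping and x̄ ∈ ℝⁿ. Suppose there exist r > 0 and ζ ∈ (0,1) such that gph Φ ∩ (B_r[x̄] × B_r[x̄]) is closed, d(x̄, Φ(x̄)) ≤ r(1 - ζ), and e(Φ(x) ∩ B_r[x̄], Φ(x')) ≤ ζ‖x - x'‖ for all x, x' ∈ B_r[x̄]. Then Φ has a fixed point in B_r[x̄]: there exists x̂ ∈ B_r[x̄] with x̂ ∈ Φ(x̂). -/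
open Metric

theorem stmt_9 {n : ℕ} (Φ : EuclideanSpace ℝ (Fin n) → Set (EuclideanSpace ℝ (Fin n)))
    (xbar : EuclideanSpace ℝ (Fin n)) (r ζ : ℝ) (hr : 0 < r) (hζ0 : 0 < ζ) (hζ1 : ζ < 1)
    (hclosed : IsClosed ({p : EuclideanSpace ℝ (Fin n) × EuclideanSpace ℝ (Fin n) |
        p.2 ∈ Φ p.1} ∩ (closedBall xbar r ×ˢ closedBall xbar r)))
    (hdist : EMetric.infEdist xbar (Φ xbar) ≤ ENNReal.ofReal (r * (1 - ζ)))
    (hcontr : ∀ x ∈ closedBall xbar r, ∀ x' ∈ closedBall xbar r,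
      ∀ a ∈ Φ x ∩ closedBall xbar r,
        EMetric.infEdist a (Φ x') ≤ ENNReal.ofReal (ζ * ‖x - x'‖)) :
    ∃ xhat ∈ closedBall xbar r, xhat ∈ Φ xhat := by
  set c := r * (1 - ζ) with hc
  have hc0 : 0 ≤ c := mul_nonneg hr.le (by linarith)
  -- Selection lemma: from an infEdist bound with strict room inside the ball,
  -- select an actual nearest point (using properness / closedness of the truncated graph).
  have sel : ∀ (x : EuclideanSpace ℝ (Fin n)) (b : ℝ), x ∈ closedBall xbar r → 0 ≤ b →
      dist x xbar + b < r → EMetric.infEdist x (Φ x) ≤ ENNReal.ofReal b →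
      ∃ y, y ∈ Φ x ∧ dist y x ≤ b ∧ dist y xbar ≤ dist x xbar + b := by
    intro x b hx hb hlt hinf
    set S := Φ x ∩ closedBall xbar r with hS
    have hSclosed : IsClosed S := by
      have h1 : IsClosed ((fun y => (x, y)) ⁻¹'
          ({p : EuclideanSpace ℝ (Fin n) × EuclideanSpace ℝ (Fin n) | p.2 ∈ Φ p.1} ∩
            (closedBall xbar r ×ˢ closedBall xbar r))) :=
        hclosed.preimage (Continuous.prodMk_right x)
      convert h1 using 1
      ext y
      simp only [hS, Set.mem_inter_iff, Set.mem_preimage, Set.mem_setOf_eq, Set.mem_prod]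
      tauto
    have hε : 0 < r - dist x xbar - b := by linarith
    have key : ∀ δ : ℝ, 0 < δ → δ ≤ r - dist x xbar - b → ∃ y ∈ S, dist x y < b + δ := by
      intro δ hδ hδ'
      have h1 : EMetric.infEdist x (Φ x) < ENNReal.ofReal (b + δ) :=
        lt_of_le_of_lt hinf ((ENNReal.ofReal_lt_ofReal_iff (by linarith)).mpr (by linarith))
      obtain ⟨y, hyΦ, hyd⟩ := EMetric.infEdist_lt_iff.mp h1
      have hyd' : dist x y < b + δ := edist_lt_ofReal.mp hyd
      refine ⟨y, ⟨hyΦ, ?_⟩, hyd'⟩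
      rw [mem_closedBall]
      calc dist y xbar ≤ dist y x + dist x xbar := dist_triangle _ _ _
        _ ≤ r := by rw [dist_comm y x]; linarith
    have hSne : S.Nonempty := by
      obtain ⟨y, hy, _⟩ := key (r - dist x xbar - b) hε le_rfl
      exact ⟨y, hy⟩
    have hinfS : infDist x S ≤ b := by
      refine le_of_forall_pos_le_add fun δ hδ => ?_
      obtain ⟨y, hy, hyd⟩ := key (min δ (r - dist x xbar - b)) (lt_min hδ hε) (min_le_right _ _)
      calc infDist x S ≤ dist x y := infDist_le_dist_of_mem hy
        _ ≤ b + min δ (r - dist x xbar - b) := hyd.le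
        _ ≤ b + δ := by linarith [min_le_left δ (r - dist x xbar - b)]
    obtain ⟨y, hyS, hyd⟩ := hSclosed.exists_infDist_eq_dist hSne x
    refine ⟨y, hyS.1, ?_, ?_⟩
    · rw [dist_comm]; rw [← hyd] at *; exact hinfS
    · calc dist y xbar ≤ dist y x + dist x xbar := dist_triangle _ _ _
        _ ≤ dist x xbar + b := by rw [dist_comm y x, ← hyd]; linarith
  -- invariant
  set Inv : ℕ → EuclideanSpace ℝ (Fin n) → EuclideanSpace ℝ (Fin n) → Prop :=
    fun k x y => y ∈ Φ x ∧ x ∈ closedBall xbar r ∧ dist y x ≤ ζ ^ k * c ∧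
      dist y xbar ≤ r * (1 - ζ ^ (k + 1)) with hInv
  have base : ∃ y, Inv 0 xbar y := by
    have hxbar : xbar ∈ closedBall xbar r := mem_closedBall_self hr.le
    have hroom : dist xbar xbar + c < r := by
      rw [dist_self]; nlinarith
    obtain ⟨y, hy1, hy2, hy3⟩ := sel xbar c hxbar hc0 hroom hdist
    exact ⟨y, hy1, hxbar, by rw [pow_zero, one_mul]; exact hy2, by
      rw [dist_self] at hy3; rw [zero_add, pow_one]; linarith⟩
  have step : ∀ k x y, Inv k x y → ∃ z, Inv (k + 1) y z := by
    intro k x y ⟨hyΦ, hxB, hyd, hyB'⟩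
    have hpk : (0:ℝ) < ζ ^ (k + 1) := pow_pos hζ0 _
    have hpk2 : (0:ℝ) < ζ ^ (k + 2) := pow_pos hζ0 _
    have hpk1 : ζ ^ (k + 1) ≤ 1 := pow_le_one₀ hζ0.le hζ1.le
    have hyB : y ∈ closedBall xbar r := by
      rw [mem_closedBall]
      nlinarith
    have hinf : EMetric.infEdist y (Φ y) ≤ ENNReal.ofReal (ζ * dist y x) := by
      have := hcontr x hxB y hyB y ⟨hyΦ, hyB⟩
      rwa [← dist_eq_norm, dist_comm x y] at this
    have hb : 0 ≤ ζ * dist y x := mul_nonneg hζ0.le dist_nonneg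
    have hbd : ζ * dist y x ≤ ζ ^ (k + 1) * c := by
      rw [pow_succ, mul_comm (ζ ^ k) ζ, mul_assoc]
      exact mul_le_mul_of_nonneg_left hyd hζ0.le
    have hroom : dist y xbar + ζ * dist y x < r := by
      have : ζ ^ (k + 1) * c = r * ζ ^ (k + 1) - r * ζ ^ (k + 2) := by
        rw [hc]; ring
      nlinarith
    obtain ⟨z, hz1, hz2, hz3⟩ := sel y (ζ * dist y x) hyB hb hroom hinf
    refine ⟨z, hz1, hyB, hz2.trans hbd, ?_⟩
    have : ζ ^ (k + 1) * c = r * ζ ^ (k + 1) - r * ζ ^ (k + 2) := by rw [hc]; ring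
    calc dist z xbar ≤ dist y xbar + ζ * dist y x := hz3
      _ ≤ r * (1 - ζ ^ (k + 1)) + ζ ^ (k + 1) * c := by linarith [hbd]
      _ = r * (1 - ζ ^ (k + 1 + 1)) := by rw [hc]; ring
  -- construct the sequence
  obtain ⟨y0, hy0⟩ := base
  choose! g hg using step
  let F : ∀ k : ℕ, {p : EuclideanSpace ℝ (Fin n) × EuclideanSpace ℝ (Fin n) // Inv k p.1 p.2} :=
    fun k => Nat.rec (motive := fun k =>
        {p : EuclideanSpace ℝ (Fin n) × EuclideanSpace ℝ (Fin n) // Inv k p.1 p.2})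
      ⟨(xbar, y0), hy0⟩
      (fun k ih => ⟨(ih.1.2, g k ih.1.1 ih.1.2), hg k ih.1.1 ih.1.2 ih.2⟩) k
  set u : ℕ → EuclideanSpace ℝ (Fin n) := fun k => (F k).1.1 with hu
  have hInvu : ∀ k, Inv k (u k) (u (k + 1)) := fun k => (F k).2
  have hd : ∀ k, dist (u k) (u (k + 1)) ≤ c * ζ ^ k := fun k => by
    rw [dist_comm, mul_comm]; exact (hInvu k).2.2.1
  have hcau : CauchySeq u := cauchySeq_of_le_geometric ζ c hζ1 hd
  obtain ⟨xhat, hxhat⟩ := cauchySeq_tendsto_of_complete hcau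
  have humem : ∀ k, u k ∈ closedBall xbar r := fun k => (hInvu k).2.1
  have hxhatB : xhat ∈ closedBall xbar r :=
    Metric.isClosed_closedBall.mem_of_tendsto hxhat (Filter.Eventually.of_forall humem)
  have hpair : Filter.Tendsto (fun k => (u k, u (k + 1))) Filter.atTop (nhds (xhat, xhat)) :=
    hxhat.prodMk_nhds (hxhat.comp (Filter.tendsto_add_atTop_nat 1))
  have hmemG : ∀ k, (u k, u (k + 1)) ∈
      {p : EuclideanSpace ℝ (Fin n) × EuclideanSpace ℝ (Fin n) | p.2 ∈ Φ p.1} ∩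
        (closedBall xbar r ×ˢ closedBall xbar r) :=
    fun k => ⟨(hInvu k).1, humem k, humem (k + 1)⟩
  have hG := hclosed.mem_of_tendsto hpair (Filter.Eventually.of_forall hmemG)
  exact ⟨xhat, hxhatB, hG.1⟩
end

section
/- Let δ ≥ 0, L > 0, γ ∈ (0,1), and let (x_k)_{k ≥ 0}, (y_k)_{k ≥ 0} be sequences in ℝⁿ with a point x* such that ‖y_{k-1} - x*‖ ≤ γ‖x_{k-1} - x*‖ and ‖x_k - x*‖ ≤ γ‖x_{k-1} - x*‖ for k = 1, …, n. Suppose linear maps B_k satisfy ‖B_{k+1} - A‖ ≤ ‖B_k - A‖ + (L/2)(‖y_k - x*‖ + ‖x_k - x*‖) for 0 ≤ k < n and ‖B₀ - A‖ ≤ δ. Then ‖B_n - A‖ ≤ δ + L‖x₀ - x*‖/(1 - γ). -/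
open Metric

theorem stmt_13 {m : ℕ} (δ L γ : ℝ) (hδ : 0 ≤ δ) (hL : 0 < L) (hγ0 : 0 < γ) (hγ1 : γ < 1)
    (x y : ℕ → EuclideanSpace ℝ (Fin m)) (xs : EuclideanSpace ℝ (Fin m)) (nn : ℕ)
    (hy : ∀ k, 1 ≤ k → k ≤ nn → ‖y (k - 1) - xs‖ ≤ γ * ‖x (k - 1) - xs‖)
    (hx : ∀ k, 1 ≤ k → k ≤ nn → ‖x k - xs‖ ≤ γ * ‖x (k - 1) - xs‖)
    (A : EuclideanSpace ℝ (Fin m) →L[ℝ] EuclideanSpace ℝ (Fin m))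
    (B : ℕ → EuclideanSpace ℝ (Fin m) →L[ℝ] EuclideanSpace ℝ (Fin m))
    (hB : ∀ k, k < nn →
      ‖B (k + 1) - A‖ ≤ ‖B k - A‖ + L / 2 * (‖y k - xs‖ + ‖x k - xs‖))
    (hB0 : ‖B 0 - A‖ ≤ δ) :
    ‖B nn - A‖ ≤ δ + L * ‖x 0 - xs‖ / (1 - γ) := by
  have h1γ : 0 < 1 - γ := by linarith
  have hx0 : (0:ℝ) ≤ ‖x 0 - xs‖ := norm_nonneg _
  -- x decay
  have hxk : ∀ k, k ≤ nn → ‖x k - xs‖ ≤ γ ^ k * ‖x 0 - xs‖ := by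
    intro k
    induction k with
    | zero => intro _; simp
    | succ j ih =>
      intro hk
      have h1 := hx (j + 1) (Nat.succ_le_succ (Nat.zero_le _)) hk
      simp only [Nat.add_sub_cancel] at h1
      have h2 := ih (Nat.le_of_succ_le hk)
      calc ‖x (j+1) - xs‖ ≤ γ * ‖x j - xs‖ := h1
        _ ≤ γ * (γ ^ j * ‖x 0 - xs‖) := by
            exact mul_le_mul_of_nonneg_left h2 hγ0.le
        _ = γ ^ (j+1) * ‖x 0 - xs‖ := by ring
  -- main induction
  have main : ∀ j, j ≤ nn →
      ‖B j - A‖ ≤ δ + L * ‖x 0 - xs‖ * ∑ k ∈ Finset.range j, γ ^ k := by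
    intro j
    induction j with
    | zero =>
      intro _
      simp only [Finset.range_zero, Finset.sum_empty, mul_zero, add_zero]
      exact hB0
    | succ j ih =>
      intro hj
      have hjn : j < nn := hj
      have hBj := hB j hjn
      have hyj : ‖y j - xs‖ ≤ γ * ‖x j - xs‖ := by
        have := hy (j + 1) (Nat.succ_le_succ (Nat.zero_le _)) hj
        simpa using this
      have hxj : ‖x j - xs‖ ≤ γ ^ j * ‖x 0 - xs‖ := hxk j hjn.le
      have hsum : ∑ k ∈ Finset.range (j+1), γ ^ k
          = (∑ k ∈ Finset.range j, γ ^ k) + γ ^ j := Finset.sum_range_succ _ _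
      have hstep : L / 2 * (‖y j - xs‖ + ‖x j - xs‖) ≤ L * ‖x 0 - xs‖ * γ ^ j := by
        have h3 : ‖y j - xs‖ + ‖x j - xs‖ ≤ 2 * (γ ^ j * ‖x 0 - xs‖) := by
          have : γ * ‖x j - xs‖ ≤ ‖x j - xs‖ := by
            nlinarith [norm_nonneg (x j - xs)]
          nlinarith
        nlinarith [hL.le]
      have := ih hjn.le
      rw [hsum]
      nlinarith
  have hsum_le : ∑ k ∈ Finset.range nn, γ ^ k ≤ 1 / (1 - γ) := by
    rw [geom_sum_eq (by linarith : γ ≠ 1) nn,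
      show (γ ^ nn - 1) / (γ - 1) = (1 - γ ^ nn) / (1 - γ) from by
        rw [div_eq_div_iff (by linarith) (by linarith)]; ring]
    gcongr
    nlinarith [pow_nonneg hγ0.le nn]
  have := main nn le_rfl
  have h2 : L * ‖x 0 - xs‖ * ∑ k ∈ Finset.range nn, γ ^ k
      ≤ L * ‖x 0 - xs‖ / (1 - γ) := by
    have hpos : 0 ≤ L * ‖x 0 - xs‖ := mul_nonneg hL.le hx0
    calc L * ‖x 0 - xs‖ * ∑ k ∈ Finset.range nn, γ ^ k
        ≤ L * ‖x 0 - xs‖ * (1 / (1 - γ)) := mul_le_mul_of_nonneg_left hsum_le hpos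
      _ = L * ‖x 0 - xs‖ / (1 - γ) := by ring
  linarith
end

section
/- Let C ⊆ ℝⁿ be nonempty, closed and convex, and let y ∈ ℝⁿ, x ∈ C, θ ≥ 0, and u ∈ P_C(y, x, θ). Then ‖u - P_C(y)‖² ≤ 2θ‖y - x‖², i.e., ‖u - P_C(y)‖ ≤ √(2θ)‖y - x‖. -/
open Metric
open scoped RealInnerProductSpace

theorem stmt_14 {n : ℕ} (C : Set (EuclideanSpace ℝ (Fin n)))
    (hCne : C.Nonempty) (hCclosed : IsClosed C) (hCconv : Convex ℝ C)
    (y x : EuclideanSpace ℝ (Fin n)) (hx : x ∈ C) (θ : ℝ) (hθ : 0 ≤ θ)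
    (u : EuclideanSpace ℝ (Fin n)) (hu : u ∈ C)
    (hinexact : ∀ z ∈ C, ⟪y - u, z - u⟫ ≤ θ * ‖y - x‖ ^ 2)
    (p : EuclideanSpace ℝ (Fin n)) (hp : p ∈ C)
    (hproj : ∀ z ∈ C, ⟪y - p, z - p⟫ ≤ 0) :
    ‖u - p‖ ^ 2 ≤ 2 * θ * ‖y - x‖ ^ 2 ∧
      ‖u - p‖ ≤ Real.sqrt (2 * θ) * ‖y - x‖ := by
  have h1 := hinexact p hp
  have h2 := hproj u hu
  have key : ‖u - p‖ ^ 2 ≤ 2 * θ * ‖y - x‖ ^ 2 := by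
    have hsum : ‖u - p‖ ^ 2 = ⟪y - p, u - p⟫ + ⟪y - u, p - u⟫ := by
      have : (u - p : EuclideanSpace ℝ (Fin n)) = (y - p) - (y - u) := by abel
      rw [← real_inner_self_eq_norm_sq]
      nth_rewrite 1 [this]
      rw [inner_sub_left]
      have : ⟪y - u, u - p⟫ = -⟪y - u, p - u⟫ := by
        rw [← inner_neg_right]; congr 1; abel
      rw [this]; ring
    have hnn : 0 ≤ θ * ‖y - x‖ ^ 2 := by positivity
    nlinarith
  refine ⟨key, ?_⟩
  have := Real.sqrt_le_sqrt key
  rw [Real.sqrt_sq (norm_nonneg _)] at this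
  calc ‖u - p‖ ≤ Real.sqrt (2 * θ * ‖y - x‖ ^ 2) := this
    _ = Real.sqrt (2 * θ) * ‖y - x‖ := by
        rw [Real.sqrt_mul (by positivity), Real.sqrt_sq (norm_nonneg _)]
end

section
/- Let f : ℝⁿ → ℝⁿ be continuously differentiable with f' Lipschitz with constant L on an open convex set Ω, let g : Ω → ℝⁿ admit divided differences with second-order divided differences bounded by M, let x*, x, x', z ∈ B_α[x*] ⊆ Ω, and let ε > 0 satisfy 2Lα < ε. Define h(x) := f(x*) + g(x*) + [f'(x*) + [z, x*; g]](x - x*) - f(x) - g(x). Then h(x*) = 0 and ‖h(x) - h(x')‖ ≤ (ε + 3αM)‖x - x'‖ for all x, x' ∈ B_α[x*]. -/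
/-!
Split `h x - h x'` into the first-order Taylor remainder of `f` at `x*` and the
term `([x', x; g] - [z, x*; g]) (x - x')`. The mean value inequality, with `f'` kept
within `L α` of `f' x*` on the ball, bounds the first by `L α ‖x - x'‖ ≤ ε ‖x - x'‖`.
Passing from `[z, x*]` to `[x*, x']` and then to `[x', x]` costs two second-order
divided differences, of sizes `M ‖x' - z‖ ≤ 2 α M` and `M ‖x - x*‖ ≤ α M`.
-/

open Metric

variable {E F : Type*} [NormedAddCommGroup E] [NormedSpace ℝ E]
  [NormedAddCommGroup F] [NormedSpace ℝ F]

theorem norm_image_sub_sub_fderiv_center_le {f : E → F} {f' : E → E →L[ℝ] F} {a : E}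
    {r L : ℝ} (hL : 0 ≤ L) (hf : ∀ w ∈ closedBall a r, HasFDerivAt f (f' w) w)
    (hLip : ∀ w ∈ closedBall a r, ‖f' w - f' a‖ ≤ L * ‖w - a‖)
    {x y : E} (hx : x ∈ closedBall a r) (hy : y ∈ closedBall a r) :
    ‖f x - f y - f' a (x - y)‖ ≤ L * r * ‖x - y‖ := by
  refine (convex_closedBall a r).norm_image_sub_le_of_norm_hasFDerivWithin_le'
    (fun w hw => (hf w hw).hasFDerivWithinAt) (fun w hw => ?_) hy hx
  calc ‖f' w - f' a‖ ≤ L * ‖w - a‖ := hLip w hw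
    _ ≤ L * r := by gcongr; rwa [← dist_eq_norm, ← mem_closedBall]

theorem norm_divDiff_sub_divDiff_le {s : Set E} {D1 : E → E → E →L[ℝ] F}
    {D2 : E → E → E → E →L[ℝ] E →L[ℝ] F} {M : ℝ}
    (hD2 : ∀ x ∈ s, ∀ y ∈ s, ∀ z ∈ s, D2 x y z (z - x) = D1 y z - D1 x y)
    (hbound : ∀ x ∈ s, ∀ y ∈ s, ∀ z ∈ s, ‖D2 x y z‖ ≤ M)
    {a b c d : E} (ha : a ∈ s) (hb : b ∈ s) (hc : c ∈ s) (hd : d ∈ s) :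
    ‖D1 c d - D1 a b‖ ≤ M * ‖c - a‖ + M * ‖d - b‖ := by
  have hsplit : D1 c d - D1 a b = D2 a b c (c - a) + D2 b c d (d - b) := by
    rw [hD2 a ha b hb c hc, hD2 b hb c hc d hd]; abel
  rw [hsplit]
  exact (norm_add_le _ _).trans <| add_le_add
    ((D2 a b c).le_of_opNorm_le (hbound a ha b hb c hc) _)
    ((D2 b c d).le_of_opNorm_le (hbound b hb c hc d hd) _)

theorem stmt_18_general {n : ℕ} (Ω : Set (EuclideanSpace ℝ (Fin n)))
    (f : EuclideanSpace ℝ (Fin n) → EuclideanSpace ℝ (Fin n))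
    (f' : EuclideanSpace ℝ (Fin n) → EuclideanSpace ℝ (Fin n) →L[ℝ] EuclideanSpace ℝ (Fin n))
    (hdiff : ∀ u ∈ Ω, HasFDerivAt f (f' u) u)
    (L : ℝ) (hL : 0 < L)
    (hLip : ∀ u ∈ Ω, ∀ v ∈ Ω, ‖f' u - f' v‖ ≤ L * ‖u - v‖)
    (g : EuclideanSpace ℝ (Fin n) → EuclideanSpace ℝ (Fin n))
    (D1 : EuclideanSpace ℝ (Fin n) → EuclideanSpace ℝ (Fin n) →
      (EuclideanSpace ℝ (Fin n) →L[ℝ] EuclideanSpace ℝ (Fin n)))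
    (D2 : EuclideanSpace ℝ (Fin n) → EuclideanSpace ℝ (Fin n) → EuclideanSpace ℝ (Fin n) →
      (EuclideanSpace ℝ (Fin n) →L[ℝ]
        EuclideanSpace ℝ (Fin n) →L[ℝ] EuclideanSpace ℝ (Fin n)))
    (hD1 : ∀ x ∈ Ω, ∀ y ∈ Ω, D1 x y (y - x) = g y - g x)
    (hD2 : ∀ x ∈ Ω, ∀ y ∈ Ω, ∀ z ∈ Ω, D2 x y z (z - x) = D1 y z - D1 x y)
    (M : ℝ)
    (hbound : ∀ x ∈ Ω, ∀ y ∈ Ω, ∀ z ∈ Ω, ‖D2 x y z‖ ≤ M)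
    (xs z : EuclideanSpace ℝ (Fin n)) (α : ℝ)
    (hball : closedBall xs α ⊆ Ω) (hzball : z ∈ closedBall xs α)
    (ε : ℝ) (hLαε : 2 * L * α < ε)
    (h : EuclideanSpace ℝ (Fin n) → EuclideanSpace ℝ (Fin n))
    (hdef : ∀ w, h w = f xs + g xs + (f' xs + D1 z xs) (w - xs) - f w - g w) :
    h xs = 0 ∧ ∀ x ∈ closedBall xs α, ∀ x' ∈ closedBall xs α,
      ‖h x - h x'‖ ≤ (ε + 3 * α * M) * ‖x - x'‖ := by
  have hα : 0 ≤ α := dist_nonneg.trans (mem_closedBall.mp hzball)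
  have hxs : xs ∈ closedBall xs α := mem_closedBall_self hα
  refine ⟨by simp [hdef], fun x hx x' hx' => ?_⟩
  have hsplit : h x - h x' =
      -(f x - f x' - f' xs (x - x')) - (D1 x' x - D1 z xs) (x - x') := by
    rw [hdef, hdef, sub_apply, hD1 x' (hball hx') x (hball hx)]
    simp only [add_apply, map_sub]
    abel
  have hTaylor := norm_image_sub_sub_fderiv_center_le hL.le (fun w hw => hdiff w (hball hw))
    (fun w hw => hLip w (hball hw) xs (hball hxs)) hx hx'
  have hDivDiff := norm_divDiff_sub_divDiff_le hD2 hbound (hball hzball) (hball hxs)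
    (hball hx') (hball hx)
  have hx'z : ‖x' - z‖ ≤ 2 * α := by
    rw [← dist_eq_norm, two_mul]
    exact dist_triangle_right x' z xs |>.trans (add_le_add hx' hzball)
  have hxxs : ‖x - xs‖ ≤ α := by rwa [← dist_eq_norm, ← mem_closedBall]
  have hM : 0 ≤ M :=
    (norm_nonneg (D2 xs xs xs)).trans (hbound xs (hball hxs) xs (hball hxs) xs (hball hxs))
  calc ‖h x - h x'‖
      ≤ ‖f x - f x' - f' xs (x - x')‖ + ‖(D1 x' x - D1 z xs) (x - x')‖ := by
        rw [hsplit, ← norm_neg (f x - f x' - _)]; exact norm_sub_le _ _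
    _ ≤ L * α * ‖x - x'‖ + (M * (2 * α) + M * α) * ‖x - x'‖ := by
        exact add_le_add hTaylor
          ((D1 x' x - D1 z xs).le_of_opNorm_le (hDivDiff.trans (by gcongr)) _)
    _ = (L * α + 3 * α * M) * ‖x - x'‖ := by ring
    _ ≤ (ε + 3 * α * M) * ‖x - x'‖ := by gcongr; nlinarith

theorem stmt_18 {n : ℕ} (Ω : Set (EuclideanSpace ℝ (Fin n))) (hΩ : IsOpen Ω)
    (hconv : Convex ℝ Ω)
    (f : EuclideanSpace ℝ (Fin n) → EuclideanSpace ℝ (Fin n))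
    (f' : EuclideanSpace ℝ (Fin n) → EuclideanSpace ℝ (Fin n) →L[ℝ] EuclideanSpace ℝ (Fin n))
    (hdiff : ∀ u ∈ Ω, HasFDerivAt f (f' u) u)
    (hfcont : ContinuousOn f' Ω)
    (L : ℝ) (hL : 0 < L)
    (hLip : ∀ u ∈ Ω, ∀ v ∈ Ω, ‖f' u - f' v‖ ≤ L * ‖u - v‖)
    (g : EuclideanSpace ℝ (Fin n) → EuclideanSpace ℝ (Fin n))
    (D1 : EuclideanSpace ℝ (Fin n) → EuclideanSpace ℝ (Fin n) →
      (EuclideanSpace ℝ (Fin n) →L[ℝ] EuclideanSpace ℝ (Fin n)))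
    (D2 : EuclideanSpace ℝ (Fin n) → EuclideanSpace ℝ (Fin n) → EuclideanSpace ℝ (Fin n) →
      (EuclideanSpace ℝ (Fin n) →L[ℝ]
        EuclideanSpace ℝ (Fin n) →L[ℝ] EuclideanSpace ℝ (Fin n)))
    (hD1 : ∀ x ∈ Ω, ∀ y ∈ Ω, D1 x y (y - x) = g y - g x)
    (hD2 : ∀ x ∈ Ω, ∀ y ∈ Ω, ∀ z ∈ Ω, D2 x y z (z - x) = D1 y z - D1 x y)
    (M : ℝ) (hM : 0 < M)
    (hbound : ∀ x ∈ Ω, ∀ y ∈ Ω, ∀ z ∈ Ω, ‖D2 x y z‖ ≤ M)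
    (xs z : EuclideanSpace ℝ (Fin n)) (α : ℝ) (hα : 0 < α)
    (hball : closedBall xs α ⊆ Ω) (hzball : z ∈ closedBall xs α)
    (ε : ℝ) (hε : 0 < ε) (hLαε : 2 * L * α < ε)
    (h : EuclideanSpace ℝ (Fin n) → EuclideanSpace ℝ (Fin n))
    (hdef : ∀ w, h w = f xs + g xs + (f' xs + D1 z xs) (w - xs) - f w - g w) :
    h xs = 0 ∧ ∀ x ∈ closedBall xs α, ∀ x' ∈ closedBall xs α,
      ‖h x - h x'‖ ≤ (ε + 3 * α * M) * ‖x - x'‖ :=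
  stmt_18_general Ω f f' hdiff L hL hLip g D1 D2 hD1 hD2 M hbound xs z α hball hzball ε hLαε h hdef
end

section
/- Let f : ℝⁿ → ℝⁿ be continuously differentiable, g : Ω → ℝⁿ continuous with divided differences whose second-order divided differences are bounded by M, B₀ a linear map with ‖B₀ - f'(x*)‖ ≤ δ, and suppose ‖f(x₀) - f(x*) - f'(x*)(x₀ - x*)‖ ≤ ε‖x₀ - x*‖ and ‖z - x*‖ ≤ τ. Define h₀(x*) := f(x₀) + g(x₀) - f(x*) - g(x*) + (B₀ + [z, x₀; g])(x* - x₀). Then ‖h₀(x*)‖ ≤ (ε + δ + Mτ)‖x₀ - x*‖. -/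
open Metric

theorem stmt_19 {n : ℕ} (Ω : Set (EuclideanSpace ℝ (Fin n))) (hΩ : IsOpen Ω)
    (f : EuclideanSpace ℝ (Fin n) → EuclideanSpace ℝ (Fin n))
    (f' : EuclideanSpace ℝ (Fin n) → EuclideanSpace ℝ (Fin n) →L[ℝ] EuclideanSpace ℝ (Fin n))
    (hdiff : ∀ u, HasFDerivAt f (f' u) u)
    (hfcont : Continuous f')
    (g : EuclideanSpace ℝ (Fin n) → EuclideanSpace ℝ (Fin n))
    (hgcont : ContinuousOn g Ω)
    (D1 : EuclideanSpace ℝ (Fin n) → EuclideanSpace ℝ (Fin n) →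
      (EuclideanSpace ℝ (Fin n) →L[ℝ] EuclideanSpace ℝ (Fin n)))
    (D2 : EuclideanSpace ℝ (Fin n) → EuclideanSpace ℝ (Fin n) → EuclideanSpace ℝ (Fin n) →
      (EuclideanSpace ℝ (Fin n) →L[ℝ]
        EuclideanSpace ℝ (Fin n) →L[ℝ] EuclideanSpace ℝ (Fin n)))
    (hD1 : ∀ x ∈ Ω, ∀ y ∈ Ω, D1 x y (y - x) = g y - g x)
    (hD2 : ∀ x ∈ Ω, ∀ y ∈ Ω, ∀ z ∈ Ω, D2 x y z (z - x) = D1 y z - D1 x y)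
    (M δ ε τ : ℝ) (hM : 0 < M) (hδ : 0 < δ) (hε : 0 < ε) (hτ : 0 < τ)
    (hbound : ∀ x ∈ Ω, ∀ y ∈ Ω, ∀ z ∈ Ω, ‖D2 x y z‖ ≤ M)
    (x₀ xs z : EuclideanSpace ℝ (Fin n)) (hx₀ : x₀ ∈ Ω) (hxs : xs ∈ Ω) (hz : z ∈ Ω)
    (hne1 : x₀ ≠ xs) (hne2 : z ≠ x₀) (hne3 : z ≠ xs)
    (B₀ : EuclideanSpace ℝ (Fin n) →L[ℝ] EuclideanSpace ℝ (Fin n))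
    (hB₀ : ‖B₀ - f' xs‖ ≤ δ)
    (hf0 : ‖f x₀ - f xs - f' xs (x₀ - xs)‖ ≤ ε * ‖x₀ - xs‖)
    (hzτ : ‖z - xs‖ ≤ τ)
    (h₀xs : EuclideanSpace ℝ (Fin n))
    (hdef : h₀xs = f x₀ + g x₀ - f xs - g xs + (B₀ + D1 z x₀) (xs - x₀)) :
    ‖h₀xs‖ ≤ (ε + δ + M * τ) * ‖x₀ - xs‖ := by
  have e2 : (D2 z x₀ xs) (xs - z) (xs - x₀) = g xs - g x₀ - D1 z x₀ (xs - x₀) := by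
    rw [hD2 z hz x₀ hx₀ xs hxs, ContinuousLinearMap.sub_apply, hD1 x₀ hx₀ xs hxs]
  have key : h₀xs = (f x₀ - f xs - f' xs (x₀ - xs)) - (B₀ - f' xs) (x₀ - xs)
      - (D2 z x₀ xs) (xs - z) (xs - x₀) := by
    rw [hdef, e2]
    have hB : (B₀ + D1 z x₀) (xs - x₀) = B₀ (xs - x₀) + D1 z x₀ (xs - x₀) := rfl
    have hB2 : (B₀ - f' xs) (x₀ - xs) = B₀ (x₀ - xs) - f' xs (x₀ - xs) := rfl
    have hn : x₀ - xs = -(xs - x₀) := by abel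
    rw [hB, hB2, hn, map_neg, map_neg]
    abel
  have h1 : ‖(B₀ - f' xs) (x₀ - xs)‖ ≤ δ * ‖x₀ - xs‖ :=
    le_trans ((B₀ - f' xs).le_opNorm _)
      (mul_le_mul_of_nonneg_right hB₀ (norm_nonneg _))
  have h2 : ‖(D2 z x₀ xs) (xs - z) (xs - x₀)‖ ≤ M * τ * ‖x₀ - xs‖ := by
    calc ‖(D2 z x₀ xs) (xs - z) (xs - x₀)‖
        ≤ ‖D2 z x₀ xs‖ * ‖xs - z‖ * ‖xs - x₀‖ := (D2 z x₀ xs).le_opNorm₂ _ _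
      _ ≤ M * τ * ‖x₀ - xs‖ := by
          rw [norm_sub_rev xs z, norm_sub_rev xs x₀]
          have hb := hbound z hz x₀ hx₀ xs hxs
          exact mul_le_mul (mul_le_mul hb hzτ (norm_nonneg _) hM.le) le_rfl
            (norm_nonneg _) (by positivity)
  calc ‖h₀xs‖ ≤ ‖f x₀ - f xs - f' xs (x₀ - xs)‖ + ‖(B₀ - f' xs) (x₀ - xs)‖
        + ‖(D2 z x₀ xs) (xs - z) (xs - x₀)‖ := by
        rw [key]; exact (norm_sub_le _ _).trans (by gcongr; exact norm_sub_le _ _)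
    _ ≤ ε * ‖x₀ - xs‖ + δ * ‖x₀ - xs‖ + M * τ * ‖x₀ - xs‖ := by gcongr
    _ = (ε + δ + M * τ) * ‖x₀ - xs‖ := by ring
end
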